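/- arXiv:1802.01614 — 2 statements merged into one kernel-verified Lean document; each statement's English description precedes it below -/
import Mathlib

section
/- Let M, m, D be real numbers with M ≥ 1, 2m ≤ D, and 0 ≤ D ≤ M − 1. Then the numerator of the modularity increment is positive: 4M^3 − 4mM^2 − 4mM − 4DM^2 + 2D^2 M + D^2 ≥ (2M − D)(2M^2 − 2DM − D) > 0; in particular both factors satisfy 2M^2 − 2DM − D ≥ M + 1 and 2M − D ≥ M + 1. -/
/-- Key estimate in the proof of Proposition 1: the numerator of the
modularity increment is bounded below by the product `(2M − D)(2M² − 2DM − D)`,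
which is strictly positive, and in fact both factors are at least `M + 1`. -/
theorem modularity_increment_numerator_pos
    (M m D : ℝ) (hM : 1 ≤ M) (hmD : 2 * m ≤ D) (hD0 : 0 ≤ D) (hD : D ≤ M - 1) :
    4 * M ^ 3 - 4 * m * M ^ 2 - 4 * m * M - 4 * D * M ^ 2
        + 2 * D ^ 2 * M + D ^ 2
      ≥ (2 * M - D) * (2 * M ^ 2 - 2 * D * M - D) ∧
    (2 * M - D) * (2 * M ^ 2 - 2 * D * M - D) > 0 ∧
    2 * M ^ 2 - 2 * D * M - D ≥ M + 1 ∧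
    2 * M - D ≥ M + 1 := by
  have h1 : 2 * M - D ≥ M + 1 := by linarith
  have h2 : 2 * M ^ 2 - 2 * D * M - D ≥ M + 1 := by nlinarith [sq_nonneg M, sq_nonneg (M - D)]
  refine ⟨?_, ?_, h2, h1⟩
  · nlinarith [mul_nonneg (sub_nonneg.2 hM) hD0]
  · nlinarith
end

section
/- Let k ≥ 2, let M > 0 be real, let D_1, …, D_k ≥ 0 and m_1, …, m_k ≥ 0 be reals, and for i < j let e_{ij} ≥ 0 be reals; set D_c = Σ_{i=1}^k D_i and m_c = Σ_{i=1}^k m_i + Σ_{i<j} e_{ij}. After adding one new edge inside module X_1 (the graph now has M+1 edges, X_1 has m_1+1 internal edges and total degree D_1+2, and c has m_c+1 internal edges and total degree D_c+2), the split has strictly larger modularity contribution than the unsplit community, i.e. (m_c+1)/(M+1) − (D_c+2)^2/(4(M+1)^2) < (m_1+1)/(M+1) − (D_1+2)^2/(4(M+1)^2) + Σ_{i=2}^k ( m_i/(M+1) − D_i^2/(4(M+1)^2) ), if and only if Σ_{i<j} e_{ij} < ( 2(Σ_{i=1}^k D_i − D_1) + Σ_{i<j} D_i D_j ) / (2(M+1)).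 -/
/-!
Splitting a community into modules changes its modularity contribution in a graph with `M` edges
by `(∑_{i<j} D_i D_j) / (2 M²) - e / M`, where `e` counts the edges between modules, because
`(∑ D_i)² = ∑ D_i² + 2 ∑_{i<j} D_i D_j`. A new edge inside `X_1` turns the degrees into
`(D_1 + 2, D_2, …)`, whose pair-product sum is larger by `2 (∑ D_i - D_1)`.
-/

open Finset

def sumPairProducts {ι R : Type*} [Fintype ι] [LinearOrder ι] [CommSemiring R] (f : ι → R) : R :=
  ∑ p ∈ univ.filter (fun p : ι × ι => p.1 < p.2), f p.1 * f p.2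

/-- Contribution of a node set with `m` internal edges and total degree `D` to the modularity
of a graph with `M` edges. -/
noncomputable def modularityContribution (M m D : ℝ) : ℝ :=
  m / M - D ^ 2 / (4 * M ^ 2)

section

variable {ι R : Type*} [Fintype ι] [LinearOrder ι]

theorem sq_sum_eq_sum_sq_add_two_mul_sumPairProducts [CommSemiring R] (f : ι → R) :
    (∑ i, f i) ^ 2 = ∑ i, f i ^ 2 + 2 * sumPairProducts f := by
  have hswap : ∑ p ∈ univ.filter (fun p : ι × ι => p.2 < p.1), f p.1 * f p.2
      = sumPairProducts f :=
    sum_equiv (Equiv.prodComm ι ι) (by simp) (by simp [mul_comm])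
  have hdiag : ∑ p ∈ univ.filter (fun p : ι × ι => p.1 = p.2), f p.1 * f p.2
      = ∑ i, f i ^ 2 := by
    simp [sum_filter, Fintype.sum_prod_type, sq]
  have htrichotomy : ∀ p : ι × ι, f p.1 * f p.2
      = (if p.1 < p.2 then f p.1 * f p.2 else 0) + (if p.1 = p.2 then f p.1 * f p.2 else 0)
        + (if p.2 < p.1 then f p.1 * f p.2 else 0) := by
    rintro ⟨i, j⟩
    rcases lt_trichotomy i j with h | rfl | h
    · simp [h, h.ne, h.not_gt]
    · simp
    · simp [h, h.ne', h.not_gt]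
  rw [sq, sum_mul_sum, ← Fintype.sum_prod_type', sum_congr rfl fun p _ => htrichotomy p,
    sum_add_distrib, sum_add_distrib, ← sum_filter, ← sum_filter, ← sum_filter, hswap, hdiag,
    sumPairProducts]
  ring

theorem sumPairProducts_add_single [Field R] [CharZero R] (f : ι → R) (a : ι) (c : R) :
    sumPairProducts (f + Pi.single a c) = sumPairProducts f + c * (∑ i, f i - f a) := by
  have hsum : ∑ i, (f + Pi.single a c : ι → R) i = ∑ i, f i + c := by
    simp [sum_add_distrib]
  have hsum_sq :
      ∑ i, (f + Pi.single a c : ι → R) i ^ 2 + f a ^ 2 = ∑ i, f i ^ 2 + (f a + c) ^ 2 := by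
    rw [← add_sum_erase _ _ (mem_univ a), ← add_sum_erase _ (fun i => f i ^ 2) (mem_univ a),
      sum_congr rfl fun i hi => by rw [Pi.add_apply, Pi.single_eq_of_ne (ne_of_mem_erase hi),
        add_zero]]
    simp only [Pi.add_apply, Pi.single_eq_same]
    ring
  have hsq := sq_sum_eq_sum_sq_add_two_mul_sumPairProducts (f + Pi.single a c)
  have hsq₀ := sq_sum_eq_sum_sq_add_two_mul_sumPairProducts f
  rw [hsum] at hsq
  apply mul_left_cancel₀ (two_ne_zero (α := R))
  linear_combination hsq₀ - hsq - hsum_sq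

theorem modularityContribution_lt_sum_iff {M : ℝ} (hM : 0 < M) (m D : ι → ℝ) (E : ℝ) :
    modularityContribution M (∑ i, m i + E) (∑ i, D i)
        < ∑ i, modularityContribution M (m i) (D i)
      ↔ E < sumPairProducts D / (2 * M) := by
  have hgain : ∑ i, modularityContribution M (m i) (D i)
        - modularityContribution M (∑ i, m i + E) (∑ i, D i)
      = (sumPairProducts D - 2 * M * E) / (2 * M ^ 2) := by
    simp only [modularityContribution, sum_sub_distrib, ← sum_div,
      sq_sum_eq_sum_sq_add_two_mul_sumPairProducts D]
    field_simp
    ring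
  rw [← sub_pos, hgain, lt_div_iff₀ (by positivity), zero_mul, lt_div_iff₀ (by positivity),
    sub_pos, mul_comm]

theorem modularityContribution_lt_sum_after_edge_iff {M : ℝ} (hM : 0 < M) (m D : ι → ℝ) (E : ℝ)
    (a : ι) :
    modularityContribution M (∑ i, m i + E + 1) (∑ i, D i + 2)
        < modularityContribution M (m a + 1) (D a + 2)
          + ∑ i ∈ univ.erase a, modularityContribution M (m i) (D i)
      ↔ E < (2 * (∑ i, D i - D a) + sumPairProducts D) / (2 * M) := by
  set m' : ι → ℝ := m + Pi.single a 1
  set D' : ι → ℝ := D + Pi.single a 2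
  have hm : ∑ i, m' i = ∑ i, m i + 1 := by
    simp [m', sum_add_distrib]
  have hD : ∑ i, D' i = ∑ i, D i + 2 := by
    simp [D', sum_add_distrib]
  have hsplit : ∑ i, modularityContribution M (m' i) (D' i)
      = modularityContribution M (m a + 1) (D a + 2)
        + ∑ i ∈ univ.erase a, modularityContribution M (m i) (D i) := by
    rw [← add_sum_erase _ _ (mem_univ a)]
    refine congrArg₂ _ (by simp [m', D']) (sum_congr rfl fun i hi => ?_)
    simp [m', D', Pi.single_eq_of_ne (ne_of_mem_erase hi)]
  rw [add_right_comm, ← hm, ← hD, ← hsplit, modularityContribution_lt_sum_iff hM,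
    sumPairProducts_add_single, add_comm]

end

/-- Proposition 2 (split criterion after adding one new edge inside module
`X_1`, indexed here by `0`): the split has strictly larger modularity
contribution than the unsplit community iff the number of inter-module edges
is less than `(2(Σ_i D_i − D_1) + Σ_{i<j} D_i D_j) / (2(M+1))`. -/
theorem split_modularity_gt_unsplit_after_edge_iff
    (k : ℕ) (hk : 2 ≤ k) (M : ℝ) (hM : 0 < M)
    (D m : Fin k → ℝ) (e : Fin k → Fin k → ℝ) :
    ((∑ i, m i + ∑ p ∈ univ.filter (fun p : Fin k × Fin k => p.1 < p.2), e p.1 p.2) + 1)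
          / (M + 1)
        - ((∑ i, D i) + 2) ^ 2 / (4 * (M + 1) ^ 2)
      < (m ⟨0, by omega⟩ + 1) / (M + 1)
          - (D ⟨0, by omega⟩ + 2) ^ 2 / (4 * (M + 1) ^ 2)
          + ∑ i ∈ univ.erase (⟨0, by omega⟩ : Fin k),
              (m i / (M + 1) - (D i) ^ 2 / (4 * (M + 1) ^ 2))
    ↔ ∑ p ∈ univ.filter (fun p : Fin k × Fin k => p.1 < p.2), e p.1 p.2
        < (2 * ((∑ i, D i) - D ⟨0, by omega⟩)
            + ∑ p ∈ univ.filter (fun p : Fin k × Fin k => p.1 < p.2), D p.1 * D p.2)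
          / (2 * (M + 1)) :=
  modularityContribution_lt_sum_after_edge_iff (by positivity) m D _ ⟨0, by omega⟩
end
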